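/- Let f : ∂X → ℝ be non-negative and bounded, and let f̃ be its extension by 0 to X. Then for every x ∈ X the limit h(x) = lim_{k→∞} ω_x^k(f̃) exists, where ω_x^k(f̃) = ∑_ζ λ^{⋄k}(x,ζ) f̃(ζ). -/

import Mathlib

/-!
Write `a k x = ∑ᶠ ζ, dpow w k x ζ * f̃ ζ`. Expanding `dpow w (k + 1) = w ⋄ dpow w k` gives
`a (k + 1) x = ∑ᶠ ζ, w x ζ * a k ζ`, so each step applies the Markov operator of `w`, which is
monotone and preserves upper bounds by constants. A boundary point `x` is absorbing
(`w x x = 1` forces all other weights in its row to vanish), so `f̃ ≤ w f̃` pointwise; hence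
`a k x` is nondecreasing in `k`, and it is bounded by `max M 0`, so it converges.
-/

open Filter Topology

open Classical in
noncomputable def dpow {X : Type*} (w : X → X → ℝ) : ℕ → X → X → ℝ
  | 0 => fun x y => if x = y then 1 else 0
  | k + 1 => fun x y => ∑ᶠ ζ, w x ζ * dpow w k ζ y

section MarkovKernel

variable {X : Type*} {w : X → X → ℝ}

lemma finsum_mul_eq_sum (hfin : ∀ x, (Function.support (w x)).Finite) (x : X) (u : X → ℝ) :
    ∑ᶠ ζ, w x ζ * u ζ = ∑ ζ ∈ (hfin x).toFinset, w x ζ * u ζ :=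
  finsum_eq_sum_of_support_subset _ <|
    (Function.support_mul_subset_left _ _).trans (hfin x).coe_toFinset.superset

lemma finsum_mul_le_finsum_mul (hnn : ∀ x y, 0 ≤ w x y)
    (hfin : ∀ x, (Function.support (w x)).Finite) {u v : X → ℝ} (huv : ∀ ζ, u ζ ≤ v ζ)
    (x : X) : ∑ᶠ ζ, w x ζ * u ζ ≤ ∑ᶠ ζ, w x ζ * v ζ := by
  rw [finsum_mul_eq_sum hfin, finsum_mul_eq_sum hfin]
  exact Finset.sum_le_sum fun ζ _ => mul_le_mul_of_nonneg_left (huv ζ) (hnn x ζ)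

lemma eq_zero_of_diag_eq_one (hnn : ∀ x y, 0 ≤ w x y)
    (hfin : ∀ x, (Function.support (w x)).Finite) (hrow : ∀ x, ∑ᶠ y, w x y = 1)
    {x y : X} (hx : w x x = 1) (hy : y ≠ x) : w x y = 0 := by
  classical
  set s := insert y (hfin x).toFinset
  have hsum : ∑ ζ ∈ s, w x ζ = 1 := by
    rw [← hrow x, finsum_eq_sum_of_support_subset]
    simp [s]
  have hxs : x ∈ s := by simp [s, hx]
  rw [← Finset.add_sum_erase s _ hxs, hx, add_eq_left] at hsum
  exact (Finset.sum_eq_zero_iff_of_nonneg fun ζ _ => hnn x ζ).1 hsum y (by simp [s, hy])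

lemma finsum_mul_eq_of_diag_eq_one (hnn : ∀ x y, 0 ≤ w x y)
    (hfin : ∀ x, (Function.support (w x)).Finite) (hrow : ∀ x, ∑ᶠ y, w x y = 1)
    {x : X} (hx : w x x = 1) (u : X → ℝ) : ∑ᶠ ζ, w x ζ * u ζ = u x := by
  rw [finsum_eq_single _ x fun ζ hζ => by rw [eq_zero_of_diag_eq_one hnn hfin hrow hx hζ, zero_mul],
    hx, one_mul]

lemma le_finsum_mul_boundary_ext (hnn : ∀ x y, 0 ≤ w x y)
    (hfin : ∀ x, (Function.support (w x)).Finite) (hrow : ∀ x, ∑ᶠ y, w x y = 1)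
    {f : X → ℝ} (hf0 : ∀ x, w x x = 1 → 0 ≤ f x) (x : X) :
    (if w x x = 1 then f x else 0) ≤ ∑ᶠ ζ, w x ζ * if w ζ ζ = 1 then f ζ else 0 := by
  have hext_nonneg (ζ : X) : 0 ≤ if w ζ ζ = 1 then f ζ else 0 := by
    split_ifs with hζ
    exacts [hf0 ζ hζ, le_rfl]
  by_cases hx : w x x = 1
  · exact (finsum_mul_eq_of_diag_eq_one hnn hfin hrow hx fun ζ => if w ζ ζ = 1 then f ζ else 0).ge
  · rw [if_neg hx]
    exact finsum_nonneg fun ζ => mul_nonneg (hnn x ζ) (hext_nonneg ζ)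

end MarkovKernel

section Powers

variable {X : Type*} {w : X → X → ℝ}

lemma dpow_support_finite (hfin : ∀ x, (Function.support (w x)).Finite) (k : ℕ) (x : X) :
    (Function.support (dpow w k x)).Finite := by
  induction k generalizing x with
  | zero =>
    refine (Set.finite_singleton x).subset fun y hy => ?_
    by_contra hxy
    exact hy (if_neg fun h => hxy h.symm)
  | succ k ih =>
    refine ((hfin x).biUnion fun ζ _ => ih ζ).subset fun y hy => ?_
    obtain ⟨ζ, hζ⟩ := not_forall.mp (mt finsum_eq_zero_of_forall_eq_zero hy)
    exact Set.mem_biUnion (left_ne_zero_of_mul hζ) (right_ne_zero_of_mul hζ)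

lemma dpow_nonneg (hnn : ∀ x y, 0 ≤ w x y) (k : ℕ) (x y : X) : 0 ≤ dpow w k x y := by
  induction k generalizing x with
  | zero => simp only [dpow]; split_ifs <;> norm_num
  | succ k ih => exact finsum_nonneg fun ζ => mul_nonneg (hnn x ζ) (ih ζ)

lemma finsum_dpow_zero_mul (x : X) (g : X → ℝ) : ∑ᶠ ζ, dpow w 0 x ζ * g ζ = g x := by
  rw [finsum_eq_single _ x fun ζ hζ => by simp [dpow, Ne.symm hζ]]
  simp [dpow]

lemma finsum_dpow_succ_mul (hfin : ∀ x, (Function.support (w x)).Finite) (k : ℕ) (x : X)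
    (g : X → ℝ) :
    ∑ᶠ ζ, dpow w (k + 1) x ζ * g ζ = ∑ᶠ ζ, w x ζ * ∑ᶠ y, dpow w k ζ y * g y := by
  have hrow_fin (ζ : X) : (Function.support fun y => w x ζ * (dpow w k ζ y * g y)).Finite :=
    (dpow_support_finite hfin k ζ).subset fun y hy =>
      left_ne_zero_of_mul (right_ne_zero_of_mul hy)
  calc ∑ᶠ y, dpow w (k + 1) x y * g y
      = ∑ᶠ y, ∑ ζ ∈ (hfin x).toFinset, w x ζ * (dpow w k ζ y * g y) := by
        refine finsum_congr fun y => ?_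
        change (∑ᶠ ζ, w x ζ * dpow w k ζ y) * g y = _
        rw [finsum_mul_eq_sum hfin, Finset.sum_mul]
        simp only [mul_assoc]
    _ = ∑ ζ ∈ (hfin x).toFinset, ∑ᶠ y, w x ζ * (dpow w k ζ y * g y) :=
        finsum_sum_comm _ _ fun ζ _ => hrow_fin ζ
    _ = ∑ᶠ ζ, w x ζ * ∑ᶠ y, dpow w k ζ y * g y := by
        simp only [← mul_finsum, finsum_mul_eq_sum hfin]

lemma monotone_finsum_dpow_mul (hnn : ∀ x y, 0 ≤ w x y)
    (hfin : ∀ x, (Function.support (w x)).Finite) {g : X → ℝ}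
    (hg : ∀ x, g x ≤ ∑ᶠ ζ, w x ζ * g ζ) (x : X) :
    Monotone fun k => ∑ᶠ ζ, dpow w k x ζ * g ζ := by
  suffices h : ∀ k x, ∑ᶠ ζ, dpow w k x ζ * g ζ ≤ ∑ᶠ ζ, dpow w (k + 1) x ζ * g ζ from
    monotone_nat_of_le_succ fun k => h k x
  intro k
  induction k with
  | zero =>
    intro x
    simpa only [finsum_dpow_succ_mul hfin, finsum_dpow_zero_mul] using hg x
  | succ k ih =>
    intro x
    rw [finsum_dpow_succ_mul hfin k, finsum_dpow_succ_mul hfin (k + 1)]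
    exact finsum_mul_le_finsum_mul hnn hfin ih x

lemma finsum_dpow_mul_le (hnn : ∀ x y, 0 ≤ w x y)
    (hfin : ∀ x, (Function.support (w x)).Finite) (hrow : ∀ x, ∑ᶠ y, w x y = 1)
    {g : X → ℝ} {C : ℝ} (hg : ∀ ζ, g ζ ≤ C) (k : ℕ) (x : X) :
    ∑ᶠ ζ, dpow w k x ζ * g ζ ≤ C := by
  induction k generalizing x with
  | zero => exact (finsum_dpow_zero_mul x g).trans_le (hg x)
  | succ k ih =>
    calc ∑ᶠ ζ, dpow w (k + 1) x ζ * g ζ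
        = ∑ᶠ ζ, w x ζ * ∑ᶠ y, dpow w k ζ y * g y := finsum_dpow_succ_mul hfin k x g
      _ ≤ ∑ᶠ ζ, w x ζ * C := finsum_mul_le_finsum_mul hnn hfin ih x
      _ = C := by rw [← finsum_mul, hrow x, one_mul]

end Powers

theorem stmt_12_general {X : Type*} (w : X → X → ℝ)
    (hnn : ∀ x y, 0 ≤ w x y) (hfin : ∀ x, (Function.support (w x)).Finite)
    (hrow : ∀ x, ∑ᶠ y, w x y = 1)
    (f : X → ℝ) (hf0 : ∀ x, w x x = 1 → 0 ≤ f x)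
    (hfb : ∃ M : ℝ, ∀ x, w x x = 1 → f x ≤ M) :
    ∀ x : X, ∃ L : ℝ,
      Tendsto (fun k => ∑ᶠ ζ, dpow w k x ζ * (if w ζ ζ = 1 then f ζ else 0))
        atTop (𝓝 L) := by
  intro x
  obtain ⟨M, hM⟩ := hfb
  have hext_le (ζ : X) : (if w ζ ζ = 1 then f ζ else 0) ≤ max M 0 := by
    split_ifs with hζ
    exacts [le_max_of_le_left (hM ζ hζ), le_max_right M 0]
  refine ⟨_, tendsto_atTop_ciSup
    (monotone_finsum_dpow_mul hnn hfin (le_finsum_mul_boundary_ext hnn hfin hrow hf0) x)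
    ⟨max M 0, ?_⟩⟩
  rintro _ ⟨k, rfl⟩
  exact finsum_dpow_mul_le hnn hfin hrow hext_le k x

/-- for nonnegative bounded boundary data extended by 0,
the limit h(x) = lim_k ω_x^k(f̃) exists. -/
theorem stmt_12 {X : Type*} [Countable X] (w : X → X → ℝ)
    (hnn : ∀ x y, 0 ≤ w x y) (hfin : ∀ x, (Function.support (w x)).Finite)
    (hrow : ∀ x, ∑ᶠ y, w x y = 1)
    (f : X → ℝ) (hf0 : ∀ x, w x x = 1 → 0 ≤ f x)
    (hfb : ∃ M : ℝ, ∀ x, w x x = 1 → f x ≤ M) :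
    ∀ x : X, ∃ L : ℝ,
      Tendsto (fun k => ∑ᶠ ζ, dpow w k x ζ * (if w ζ ζ = 1 then f ζ else 0))
        atTop (𝓝 L) :=
  stmt_12_general w hnn hfin hrow f hf0 hfb
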